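/- Let k ≥ 1 and let S^{2k+1} be the unit sphere in ℂ^{k+1} ≅ ℝ^{2k+2}, with H the Hopf vector field H(x) = ix. Then at every point x ∈ S^{2k+1}, the squared norm of the covariant derivative of H satisfies ‖∇H‖²(x) = Σ_a ‖∇_{e_a} H‖² = 2k, where (e_a), a = 1, …, 2k+1, is any orthonormal basis of T_x S^{2k+1}. Consequently, for any measurable K ⊆ S^{2k+1}, the energy of H on K is E(H) = ((2k+1)/2 + k)·vol(K). -/

import Mathlib

open MeasureTheory Metric Finset
open scoped RealInnerProductSpace

noncomputable section

/-- `ℝⁿ` as a Euclidean space. -/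
abbrev Euc (n : ℕ) : Type := EuclideanSpace ℝ (Fin n)

/-- The unit sphere `Sⁿ⁻¹ ⊆ ℝⁿ`. -/
def unitSphere (n : ℕ) : Set (Euc n) := Metric.sphere (0 : Euc n) 1

/-- Orthogonal projection of `ℝⁿ` onto the tangent space `x^⊥ = T_x Sⁿ⁻¹` of the unit
sphere at `x`, regarded as a map `ℝⁿ → ℝⁿ`. -/
def tangProj (n : ℕ) (x : Euc n) : Euc n →L[ℝ] Euc n :=
  (Submodule.span ℝ {x})ᗮ.subtypeL ∘L Submodule.orthogonalProjectionOnto (Submodule.span ℝ {x})ᗮ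

/-- The covariant derivative (in the Levi-Civita connection of the round sphere) of a
tangent vector field `v` at `x`, as a linear operator `Y ↦ ∇_Y v` on `ℝⁿ`:
the derivative of `v` within the sphere in the tangent direction, followed by orthogonal
projection onto the tangent space `x^⊥`.  It vanishes on `(T_x S)^⊥` and takes values in
`T_x S`, so it represents the operator `∇v : T_x S → T_x S`. -/
def covOp (n : ℕ) (v : Euc n → Euc n) (x : Euc n) : Euc n →L[ℝ] Euc n :=
  tangProj n x ∘L fderivWithin ℝ v (unitSphere n) x ∘L tangProj n x

/-- `v` is solenoidal (divergence free) on `U`: the trace of `Y ↦ ∇_Y v` on `T_x S`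
vanishes at every `x ∈ U` (as `covOp` vanishes on `(T_x S)^⊥` and maps into `T_x S`,
its trace on the ambient space equals its trace on `T_x S`). -/
def Solenoidal (n : ℕ) (v : Euc n → Euc n) (U : Set (Euc n)) : Prop :=
  ∀ x ∈ U, LinearMap.trace ℝ (Euc n) (covOp n v x : Euc n →ₗ[ℝ] Euc n) = 0

/-- `‖∇v‖²(x) = Σ_a ‖∇_{e_a} v‖²`: the squared Hilbert–Schmidt norm of `∇v` at `x`,
computed with an orthonormal basis of `ℝⁿ` (this agrees with the sum over an orthonormal
basis of `T_x S` since `covOp` vanishes on `(T_x S)^⊥`). -/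
def gradSq (n : ℕ) (v : Euc n → Euc n) (x : Euc n) : ℝ :=
  ∑ i : Fin n, ‖covOp n v x (EuclideanSpace.basisFun (Fin n) ℝ i)‖ ^ 2

/-- The energy of the unit vector field `v` on `K ⊆ S^{2k+1}`:
`E(v) = ((2k+1)/2)·vol(K) + (1/2)∫_K ‖∇v‖²`, with `vol` the `(2k+1)`-dimensional
Hausdorff measure. -/
def energyOn (k : ℕ) (v : Euc (2 * k + 2) → Euc (2 * k + 2)) (K : Set (Euc (2 * k + 2))) : ℝ :=
  ((2 * (k : ℝ) + 1) / 2) * (μH[(2 * (k : ℝ) + 1)] K).toReal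
    + (1 / 2) * ∫ x in K, gradSq (2 * k + 2) v x ∂(μH[(2 * (k : ℝ) + 1)])

/-- The Hopf vector field `H(x) = ix` on `ℝ^{2k+2} ≅ ℂ^{k+1}`, where the identification
pairs the coordinates as `(x₀, x₁), (x₂, x₃), …`: on each pair `(a, b) = a + bi` we have
`i(a+bi) = -b + ai`. -/
def hopf (k : ℕ) (x : Euc (2 * k + 2)) : Euc (2 * k + 2) := WithLp.toLp 2 fun i =>
  if h : (i : ℕ) % 2 = 0 then -x ⟨(i : ℕ) + 1, by have := i.isLt; omega⟩
  else x ⟨(i : ℕ) - 1, by have := i.isLt; omega⟩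

/-- The boundary `∂K` of a full-dimensional compact submanifold-with-boundary
`K` of the unit sphere: its topological frontier relative to the sphere. -/
def relFrontier (n : ℕ) (K : Set (Euc n)) : Set (Euc n) :=
  closure K ∩ closure (unitSphere n \ K)

/-- `U` is an open subset of the unit sphere `Sⁿ⁻¹` (in the subspace topology). -/
def IsOpenInSphere (n : ℕ) (U : Set (Euc n)) : Prop :=
  U ⊆ unitSphere n ∧ ∃ V : Set (Euc n), IsOpen V ∧ U = V ∩ unitSphere n

/-!
The Hopf field is the restriction to the sphere of the linear complex structure `J` of
`ℂ^{k+1} ≅ ℝ^{2k+2}`, which is skew-adjoint with `J² = -1`. Hence at a unit vector `x` the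
covariant derivative is `e ↦ P (J (P e))` with `P` the orthogonal projection onto `x^⊥`, and
a direct computation gives `‖P J P e‖² = ‖e‖² - ⟪x, e⟫² - ⟪J x, e⟫²`. Summing over an
orthonormal basis, Parseval turns the last two terms into `‖x‖² + ‖J x‖² = 2`, so
`‖∇H‖² = (2k + 2) - 2 = 2k` is constant and the energy is obtained by integrating a constant.
-/

open scoped Topology

section TangentCone

variable {𝕜 E : Type*} [NontriviallyNormedField 𝕜] [NormedAddCommGroup E] [NormedSpace 𝕜 E]

theorem mem_tangentConeAt_of_hasDerivAt {s : Set E} {γ : 𝕜 → E} {y : E}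
    (hγs : ∀ᶠ t in 𝓝[≠] 0, γ t ∈ s) (hγ : HasDerivAt γ y 0) :
    y ∈ tangentConeAt 𝕜 s (γ 0) := by
  refine mem_tangentConeAt_of_seq (𝓝[≠] 0) (·⁻¹) (γ · - γ 0) ?_ ?_ ?_
  · simpa using (hγ.continuousAt.tendsto.sub_const (γ 0)).mono_left nhdsWithin_le_nhds
  · simpa using hγs
  · simpa using hγ.tendsto_slope_zero

end TangentCone

section Sphere

variable {E F : Type*} [NormedAddCommGroup E] [InnerProductSpace ℝ E]
  [NormedAddCommGroup F] [NormedSpace ℝ F]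

theorem mem_tangentConeAt_sphere_of_inner_eq_zero {x y : E} (hx : ‖x‖ = 1) (hxy : ⟪x, y⟫ = 0) :
    y ∈ tangentConeAt ℝ (sphere (0 : E) 1) x := by
  -- `t ↦ (x + t • y) / ‖x + t • y‖` runs on the sphere with velocity `y` at `0`.
  set r : ℝ → ℝ := fun t => √(1 + t ^ 2 * ‖y‖ ^ 2)
  have hr_pos (t : ℝ) : 0 < r t := Real.sqrt_pos.2 (by positivity)
  have hnorm (t : ℝ) : ‖x + t • y‖ = r t := by
    rw [← Real.sqrt_sq (norm_nonneg _), norm_add_sq_real, real_inner_smul_right, hxy, norm_smul,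
      hx, mul_pow, Real.norm_eq_abs, sq_abs, one_pow, mul_zero, mul_zero, add_zero]
  have hr : HasDerivAt r 0 0 := by
    simpa using ((hasDerivAt_pow 2 (0 : ℝ)).mul_const (‖y‖ ^ 2)).const_add 1 |>.sqrt (by simp)
  have hγ : HasDerivAt (fun t => (r t)⁻¹ • (x + t • y)) y 0 := by
    simpa [r] using (hr.fun_inv (hr_pos 0).ne').fun_smul
      (((hasDerivAt_id (0 : ℝ)).smul_const y).const_add x)
  have hγs : ∀ t, (r t)⁻¹ • (x + t • y) ∈ sphere (0 : E) 1 := fun t => by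
    rw [mem_sphere_zero_iff_norm, norm_smul, hnorm, norm_inv, Real.norm_of_nonneg (hr_pos t).le,
      inv_mul_cancel₀ (hr_pos t).ne']
  simpa [r] using mem_tangentConeAt_of_hasDerivAt (Filter.Eventually.of_forall hγs) hγ

theorem HasFDerivAt.fderivWithin_sphere_apply {f : E → F} {f' : E →L[ℝ] F} {x y : E}
    (hf : HasFDerivAt f f' x) (hx : ‖x‖ = 1) (hxy : ⟪x, y⟫ = 0) :
    fderivWithin ℝ f (sphere 0 1) x y = f' y :=
  hf.hasFDerivWithinAt.differentiableWithinAt.hasFDerivWithinAt.unique_on hf.hasFDerivWithinAt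
    (mem_tangentConeAt_sphere_of_inner_eq_zero hx hxy)

end Sphere

section ComplexStructure

variable {E : Type*} [NormedAddCommGroup E] [InnerProductSpace ℝ E]

theorem inner_apply_self_eq_zero_of_skew {J : E →L[ℝ] E} (hskew : ∀ y z, ⟪J y, z⟫ = -⟪y, J z⟫)
    (y : E) : ⟪y, J y⟫ = 0 := by
  linarith [hskew y y, real_inner_comm y (J y)]

theorem inner_map_map_of_skew {J : E →L[ℝ] E} (hJJ : ∀ y, J (J y) = -y)
    (hskew : ∀ y z, ⟪J y, z⟫ = -⟪y, J z⟫) (y z : E) : ⟪J y, J z⟫ = ⟪y, z⟫ := by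
  rw [hskew, hJJ, inner_neg_right, neg_neg]

theorem norm_map_of_skew {J : E →L[ℝ] E} (hJJ : ∀ y, J (J y) = -y)
    (hskew : ∀ y z, ⟪J y, z⟫ = -⟪y, J z⟫) (y : E) : ‖J y‖ = ‖y‖ := by
  rw [← sq_eq_sq₀ (norm_nonneg _) (norm_nonneg _), ← real_inner_self_eq_norm_sq,
    ← real_inner_self_eq_norm_sq, inner_map_map_of_skew hJJ hskew]

theorem norm_sq_complexStructure_sub_add {J : E →L[ℝ] E} (hJJ : ∀ y, J (J y) = -y)
    (hskew : ∀ y z, ⟪J y, z⟫ = -⟪y, J z⟫) {x : E} (hx : ‖x‖ = 1) (e : E) :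
    ‖J e - ⟪x, e⟫ • J x + ⟪J x, e⟫ • x‖ ^ 2 = ‖e‖ ^ 2 - ⟪x, e⟫ ^ 2 - ⟪J x, e⟫ ^ 2 := by
  have hJJ' (y z : E) : ⟪J y, J z⟫ = ⟪y, z⟫ := inner_map_map_of_skew hJJ hskew y z
  have hxJx : ⟪x, J x⟫ = 0 := inner_apply_self_eq_zero_of_skew hskew x
  have hJxx : ⟪J x, x⟫ = 0 := by rw [real_inner_comm, hxJx]
  have hxJe : ⟪x, J e⟫ = -⟪J x, e⟫ := by rw [hskew, neg_neg]
  have hJex : ⟪J e, x⟫ = -⟪J x, e⟫ := by rw [real_inner_comm, hxJe]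
  have hxx : ⟪x, x⟫ = 1 := by rw [real_inner_self_eq_norm_sq, hx, one_pow]
  rw [← real_inner_self_eq_norm_sq, ← real_inner_self_eq_norm_sq e]
  simp only [inner_add_left, inner_add_right, inner_sub_left, inner_sub_right,
    real_inner_smul_left, real_inner_smul_right, hJJ', hxJx, hJxx, hxJe, hJex, hxx,
    real_inner_comm e x]
  ring

theorem OrthonormalBasis.sum_norm_sq_complexStructure_sub_add {ι : Type*} [Fintype ι]
    (b : OrthonormalBasis ι ℝ E) {J : E →L[ℝ] E} (hJJ : ∀ y, J (J y) = -y)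
    (hskew : ∀ y z, ⟪J y, z⟫ = -⟪y, J z⟫) {x : E} (hx : ‖x‖ = 1) :
    ∑ i, ‖J (b i) - ⟪x, b i⟫ • J x + ⟪J x, b i⟫ • x‖ ^ 2 = Fintype.card ι - 2 := by
  simp only [norm_sq_complexStructure_sub_add hJJ hskew hx, Finset.sum_sub_distrib,
    b.sum_sq_inner_left, b.orthonormal.1, norm_map_of_skew hJJ hskew, hx]
  simp only [one_pow, Finset.sum_const, Finset.card_univ, nsmul_eq_mul, mul_one]
  ring

end ComplexStructure

section CovariantDerivative

theorem tangProj_apply {n : ℕ} {x : Euc n} (hx : ‖x‖ = 1) (z : Euc n) :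
    tangProj n x z = z - ⟪x, z⟫ • x := by
  change (Submodule.span ℝ {x})ᗮ.starProjection z = _
  rw [Submodule.starProjection_orthogonal_val, Submodule.starProjection_unit_singleton ℝ hx]

theorem inner_tangProj_right {n : ℕ} (x z : Euc n) : ⟪x, tangProj n x z⟫ = 0 :=
  Submodule.inner_right_of_mem_orthogonal (Submodule.mem_span_singleton_self x)
    (Submodule.coe_mem _)

theorem covOp_apply_of_hasFDerivAt {n : ℕ} {v : Euc n → Euc n} {L : Euc n →L[ℝ] Euc n}
    {x : Euc n} (hv : HasFDerivAt v L x) (hx : ‖x‖ = 1) (z : Euc n) :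
    covOp n v x z = tangProj n x (L (tangProj n x z)) := by
  simp only [covOp, ContinuousLinearMap.comp_apply, unitSphere,
    hv.fderivWithin_sphere_apply hx (inner_tangProj_right x z)]

theorem covOp_complexStructure_apply {n : ℕ} {J : Euc n →L[ℝ] Euc n}
    (hskew : ∀ y z, ⟪J y, z⟫ = -⟪y, J z⟫) {x : Euc n} (hx : ‖x‖ = 1) (e : Euc n) :
    covOp n J x e = J e - ⟪x, e⟫ • J x + ⟪J x, e⟫ • x := by
  have hxJe : ⟪x, J e⟫ = -⟪J x, e⟫ := by rw [hskew, neg_neg]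
  rw [covOp_apply_of_hasFDerivAt J.hasFDerivAt hx, tangProj_apply hx, tangProj_apply hx,
    map_sub, map_smul, inner_sub_right, real_inner_smul_right,
    inner_apply_self_eq_zero_of_skew hskew, hxJe]
  module

theorem gradSq_complexStructure {n : ℕ} {J : Euc n →L[ℝ] Euc n} (hJJ : ∀ y, J (J y) = -y)
    (hskew : ∀ y z, ⟪J y, z⟫ = -⟪y, J z⟫) {x : Euc n} (hx : x ∈ unitSphere n) :
    gradSq n J x = n - 2 := by
  rw [unitSphere, mem_sphere_zero_iff_norm] at hx
  simpa [gradSq, covOp_complexStructure_apply hskew hx] using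
    (EuclideanSpace.basisFun (Fin n) ℝ).sum_norm_sq_complexStructure_sub_add hJJ hskew hx

end CovariantDerivative

namespace Hopf

variable {k : ℕ}

def pairSwap (i : Fin (2 * k + 2)) : Fin (2 * k + 2) :=
  if h : (i : ℕ) % 2 = 0 then ⟨i + 1, by have := i.isLt; omega⟩
  else ⟨i - 1, by have := i.isLt; omega⟩

def pairSign (i : Fin (2 * k + 2)) : ℝ :=
  if (i : ℕ) % 2 = 0 then -1 else 1

theorem hopf_apply (x : Euc (2 * k + 2)) (i : Fin (2 * k + 2)) :
    hopf k x i = pairSign i * x (pairSwap i) := by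
  by_cases h : (i : ℕ) % 2 = 0 <;> simp [hopf, pairSign, pairSwap, h]

theorem pairSwap_involutive : Function.Involutive (pairSwap (k := k)) := by
  intro i
  by_cases h : (i : ℕ) % 2 = 0
  · have h' : ¬ ((i : ℕ) + 1) % 2 = 0 := by omega
    ext; simp [pairSwap, h, h']
  · have h' : ((i : ℕ) - 1) % 2 = 0 := by omega
    ext; simp [pairSwap, h, h']; omega

theorem pairSign_pairSwap (i : Fin (2 * k + 2)) : pairSign (pairSwap i) = -pairSign i := by
  by_cases h : (i : ℕ) % 2 = 0
  · have h' : ¬ ((i : ℕ) + 1) % 2 = 0 := by omega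
    simp [pairSign, pairSwap, h, h']
  · have h' : ((i : ℕ) - 1) % 2 = 0 := by omega
    simp [pairSign, pairSwap, h, h']

theorem hopf_hopf (x : Euc (2 * k + 2)) : hopf k (hopf k x) = -x := by
  ext i
  have : pairSign i * pairSign i = 1 := by unfold pairSign; split_ifs <;> norm_num
  rw [hopf_apply, hopf_apply, pairSign_pairSwap, pairSwap_involutive, PiLp.neg_apply]
  linear_combination (-x i) * this

theorem inner_hopf_left (x y : Euc (2 * k + 2)) : ⟪hopf k x, y⟫ = -⟪x, hopf k y⟫ := by
  simp only [PiLp.inner_apply, RCLike.inner_apply, conj_trivial, hopf_apply,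
    ← Finset.sum_neg_distrib]
  rw [← pairSwap_involutive.bijective.sum_comp]
  refine Finset.sum_congr rfl fun i _ => ?_
  rw [pairSign_pairSwap, pairSwap_involutive]
  ring

def hopfCLM : Euc (2 * k + 2) →L[ℝ] Euc (2 * k + 2) :=
  LinearMap.toContinuousLinearMap
    { toFun := hopf k
      map_add' := fun x y => by ext i; simp only [hopf_apply, PiLp.add_apply]; ring
      map_smul' := fun c x => by
        ext i
        simp only [hopf_apply, PiLp.smul_apply, smul_eq_mul, RingHom.id_apply]
        ring }

theorem coe_hopfCLM : ⇑(hopfCLM (k := k)) = hopf k := rfl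

theorem gradSq_hopf {x : Euc (2 * k + 2)} (hx : x ∈ unitSphere (2 * k + 2)) :
    gradSq (2 * k + 2) (hopf k) x = 2 * k := by
  rw [← coe_hopfCLM, gradSq_complexStructure hopf_hopf inner_hopf_left hx]
  push_cast
  ring

end Hopf

theorem energyOn_eq_of_gradSq_eq {k : ℕ} {v : Euc (2 * k + 2) → Euc (2 * k + 2)}
    {K : Set (Euc (2 * k + 2))} {c : ℝ} (hK : MeasurableSet K)
    (hv : ∀ x ∈ K, gradSq (2 * k + 2) v x = c) :
    energyOn k v K = ((2 * (k : ℝ) + 1) / 2 + c / 2) * (μH[(2 * (k : ℝ) + 1)] K).toReal := by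
  rw [energyOn, setIntegral_congr_fun hK hv, setIntegral_const, smul_eq_mul, measureReal_def]
  ring

theorem hopf_gradSq_eq_and_energy_general (k : ℕ) :
    (∀ x ∈ unitSphere (2 * k + 2), gradSq (2 * k + 2) (hopf k) x = 2 * (k : ℝ)) ∧
      ∀ K : Set (Euc (2 * k + 2)), MeasurableSet K → K ⊆ unitSphere (2 * k + 2) →
        energyOn k (hopf k) K
          = ((2 * (k : ℝ) + 1) / 2 + k) * (μH[(2 * (k : ℝ) + 1)] K).toReal := by
  refine ⟨fun x hx => Hopf.gradSq_hopf hx, fun K hK hKS => ?_⟩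
  rw [energyOn_eq_of_gradSq_eq hK fun x hx => Hopf.gradSq_hopf (hKS hx)]
  ring

/-- For the Hopf vector field `H(x) = ix` on `S^{2k+1}` (`k ≥ 1`),
the squared norm of the covariant derivative satisfies `‖∇H‖²(x) = 2k` at every point
`x` of the sphere, and consequently for every measurable `K ⊆ S^{2k+1}` the energy of
`H` on `K` is `E(H) = ((2k+1)/2 + k)·vol(K)`. -/
theorem hopf_gradSq_eq_and_energy (k : ℕ) (hk : 1 ≤ k) :
    (∀ x ∈ unitSphere (2 * k + 2), gradSq (2 * k + 2) (hopf k) x = 2 * (k : ℝ)) ∧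
      ∀ K : Set (Euc (2 * k + 2)), MeasurableSet K → K ⊆ unitSphere (2 * k + 2) →
        energyOn k (hopf k) K
          = ((2 * (k : ℝ) + 1) / 2 + k) * (μH[(2 * (k : ℝ) + 1)] K).toReal :=
  hopf_gradSq_eq_and_energy_general k
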